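/- Threshold greedy optimality under a binding budget constraint: let μ ∈ [0,n]^m be a fractional strategy with Σ_j c_j(μ_j) = B and Σ_j c_j(μ_j) ≤ T·Σ_j v_j(μ_j), and suppose there exists t > 0 such that for every platform j and every integer s ∈ {1,…,n}: if s − 1 < μ_j then MC_j(s) ≤ t, and if s > μ_j then MC_j(s) ≥ t. Then every fractional strategy μ^a ∈ [0,n]^m with Σ_j c_j(μ^a_j) ≤ B satisfies Σ_j v_j(μ^a_j) ≤ Σ_j v_j(μ_j). -/

import Mathlib

noncomputable def MC (c v : ℕ → ℝ) (μ : ℕ) : ℝ :=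
  (c μ - c (μ - 1)) / (v μ - v (μ - 1))

noncomputable def interp (f : ℕ → ℝ) (x : ℝ) : ℝ :=
  f ⌊x⌋₊ + (x - ⌊x⌋₊) * (f (⌊x⌋₊ + 1) - f ⌊x⌋₊)

/-!
The threshold `t` is a Lagrange multiplier for the budget. On each platform the Lagrangian
`t · v − c` increases along the steps below `μ j` (there `MC ≤ t`) and decreases along the steps
above it (there `MC ≥ t`), so its piecewise linear interpolation is maximised on `[0, n]` at `μ j`.
Summing over platforms, `t · V(μa) − C(μa) ≤ t · V(μ) − C(μ)`, and `C(μa) ≤ B = C(μ)` leaves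
`V(μa) ≤ V(μ)`.
-/

open Set

lemma interp_eq_of_mem_Icc (f : ℕ → ℝ) {k : ℕ} {x : ℝ} (hkx : (k : ℝ) ≤ x) (hxk : x ≤ k + 1) :
    interp f x = f k + (x - k) * (f (k + 1) - f k) := by
  rcases hxk.lt_or_eq with hlt | rfl
  · rw [interp, (Nat.floor_eq_iff ((Nat.cast_nonneg k).trans hkx)).2 ⟨hkx, hlt⟩]
  · rw [interp, show ((k : ℝ) + 1) = ((k + 1 : ℕ) : ℝ) by push_cast; ring, Nat.floor_natCast]
    push_cast
    ring

lemma interp_neg (f : ℕ → ℝ) (x : ℝ) : interp (fun k => -f k) x = -interp f x := by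
  simp only [interp]
  ring

lemma interp_const_mul_sub (c v : ℕ → ℝ) (t x : ℝ) :
    interp (fun k => t * v k - c k) x = t * interp v x - interp c x := by
  simp only [interp]
  ring

lemma monotoneOn_interp (f : ℕ → ℝ) {a b : ℕ} (hab : a ≤ b)
    (hf : ∀ s, a ≤ s → s < b → f s ≤ f (s + 1)) :
    MonotoneOn (interp f) (Icc (a : ℝ) b) := by
  induction b, hab using Nat.le_induction with
  | base => exact (subsingleton_Icc_of_ge le_rfl).monotoneOn _
  | succ b hab ih =>
    have hstep : MonotoneOn (interp f) (Icc (b : ℝ) (b + 1)) := by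
      intro x hx y hy hxy
      rw [interp_eq_of_mem_Icc f hx.1 hx.2, interp_eq_of_mem_Icc f hy.1 hy.2]
      have hslope : 0 ≤ f (b + 1) - f b := sub_nonneg.2 (hf b hab b.lt_succ_self)
      gcongr
    have hab' : (a : ℝ) ≤ b := by exact_mod_cast hab
    rw [Nat.cast_succ, ← Icc_union_Icc_eq_Icc hab' (by linarith)]
    exact (ih fun s hs hsb => hf s hs (hsb.trans b.lt_succ_self)).union_right hstep
      (isGreatest_Icc hab') (isLeast_Icc (by linarith))

lemma antitoneOn_interp (f : ℕ → ℝ) {a b : ℕ} (hab : a ≤ b)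
    (hf : ∀ s, a ≤ s → s < b → f (s + 1) ≤ f s) :
    AntitoneOn (interp f) (Icc (a : ℝ) b) := by
  have hneg := monotoneOn_interp (fun k => -f k) hab fun s hs hsb => neg_le_neg (hf s hs hsb)
  simpa only [interp_neg, neg_neg] using hneg.neg

theorem isMaxOn_interp (g : ℕ → ℝ) (n : ℕ) {μ : ℝ} (hμ : μ ∈ Icc 0 (n : ℝ))
    (hup : ∀ s < n, (s : ℝ) < μ → g s ≤ g (s + 1))
    (hdown : ∀ s < n, μ < s + 1 → g (s + 1) ≤ g s) :
    IsMaxOn (interp g) (Icc 0 (n : ℝ)) μ := by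
  intro x hx
  rcases le_total x μ with hxμ | hμx
  · have hmono := monotoneOn_interp g (Nat.zero_le (min ⌈μ⌉₊ n)) fun s _ hs =>
      hup s (hs.trans_le (min_le_right _ _)) (Nat.lt_ceil.1 (hs.trans_le (min_le_left _ _)))
    have hμ' : μ ∈ Icc ((0 : ℕ) : ℝ) (min ⌈μ⌉₊ n : ℕ) := by
      rw [Nat.cast_min]
      exact ⟨by exact_mod_cast hμ.1, le_min (Nat.le_ceil μ) hμ.2⟩
    exact hmono ⟨by exact_mod_cast hx.1, hxμ.trans hμ'.2⟩ hμ' hxμ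
  · have hfloor : ⌊μ⌋₊ ≤ n := Nat.floor_le_of_le hμ.2
    have hanti := antitoneOn_interp g hfloor fun s hs hsn =>
      hdown s hsn ((Nat.lt_floor_add_one μ).trans_le (by exact_mod_cast Nat.add_le_add_right hs 1))
    exact hanti ⟨Nat.floor_le hμ.1, hμ.2⟩ ⟨(Nat.floor_le hμ.1).trans hμx, hx.2⟩ hμx

lemma MC_succ (c v : ℕ → ℝ) (s : ℕ) :
    MC c v (s + 1) = (c (s + 1) - c s) / (v (s + 1) - v s) := by
  rw [MC, Nat.add_sub_cancel]

lemma lagrangian_le_succ_of_MC_le {c v : ℕ → ℝ} {s : ℕ} {t : ℝ} (hv : v s < v (s + 1))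
    (h : MC c v (s + 1) ≤ t) : t * v s - c s ≤ t * v (s + 1) - c (s + 1) := by
  rw [MC_succ, div_le_iff₀ (sub_pos.2 hv)] at h
  linarith

lemma lagrangian_succ_le_of_le_MC {c v : ℕ → ℝ} {s : ℕ} {t : ℝ} (hv : v s < v (s + 1))
    (h : t ≤ MC c v (s + 1)) : t * v (s + 1) - c (s + 1) ≤ t * v s - c s := by
  rw [MC_succ, le_div_iff₀ (sub_pos.2 hv)] at h
  linarith

theorem threshold_greedy_optimal_budget_binding_general
    (m n : ℕ) (c v : Fin m → ℕ → ℝ)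
    (hv : ∀ j, ∀ s < n, v j s < v j (s + 1))
    (B : ℝ)
    (μ : Fin m → ℝ) (hbox : ∀ j, 0 ≤ μ j ∧ μ j ≤ n)
    (hbind : ∑ j, interp (c j) (μ j) = B)
    (t : ℝ) (ht : 0 < t)
    (hthresh : ∀ j, ∀ s : ℕ, 1 ≤ s → s ≤ n →
      (((s : ℝ) - 1 < μ j → MC (c j) (v j) s ≤ t) ∧
        (μ j < (s : ℝ) → t ≤ MC (c j) (v j) s)))
    (μa : Fin m → ℝ) (hboxa : ∀ j, 0 ≤ μa j ∧ μa j ≤ n)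
    (hBa : ∑ j, interp (c j) (μa j) ≤ B) :
    ∑ j, interp (v j) (μa j) ≤ ∑ j, interp (v j) (μ j) := by
  have hlagrange : ∀ j, t * interp (v j) (μa j) - interp (c j) (μa j) ≤
      t * interp (v j) (μ j) - interp (c j) (μ j) := fun j => by
    rw [← interp_const_mul_sub, ← interp_const_mul_sub]
    refine isMaxOn_interp _ n (hbox j) (fun s hs hsμ => ?_) (fun s hs hμs => ?_) (hboxa j)
    · refine lagrangian_le_succ_of_MC_le (hv j s hs) ((hthresh j (s + 1) le_add_self hs).1 ?_)
      push_cast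
      linarith
    · refine lagrangian_succ_le_of_le_MC (hv j s hs) ((hthresh j (s + 1) le_add_self hs).2 ?_)
      exact_mod_cast hμs
  have hsum := Finset.sum_le_sum fun j (_ : j ∈ Finset.univ) => hlagrange j
  simp only [Finset.sum_sub_distrib, ← Finset.mul_sum] at hsum
  exact le_of_mul_le_mul_left (by linarith) ht

/-- Threshold greedy optimality under a binding budget constraint: if
`Σ c(μ) = B`, the ROS constraint holds at `μ`, and there is a threshold `t > 0`
such that every marginal step used by `μ` has `MC ≤ t` and every unused step
has `MC ≥ t`, then `μ` attains the maximum total value among all fractional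
strategies respecting the budget. -/
theorem threshold_greedy_optimal_budget_binding
    (m n : ℕ) (c v : Fin m → ℕ → ℝ)
    (hc0 : ∀ j, c j 0 = 0) (hv0 : ∀ j, v j 0 = 0)
    (hc : ∀ j, ∀ s < n, c j s < c j (s + 1)) (hv : ∀ j, ∀ s < n, v j s < v j (s + 1))
    (hmono : ∀ j, ∀ s, 1 ≤ s → s < n → MC (c j) (v j) s ≤ MC (c j) (v j) (s + 1))
    (B T : ℝ) (hB : 0 ≤ B) (hT : 0 < T)
    (μ : Fin m → ℝ) (hbox : ∀ j, 0 ≤ μ j ∧ μ j ≤ n)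
    (hbind : ∑ j, interp (c j) (μ j) = B)
    (hros : ∑ j, interp (c j) (μ j) ≤ T * ∑ j, interp (v j) (μ j))
    (t : ℝ) (ht : 0 < t)
    (hthresh : ∀ j, ∀ s : ℕ, 1 ≤ s → s ≤ n →
      (((s : ℝ) - 1 < μ j → MC (c j) (v j) s ≤ t) ∧
        (μ j < (s : ℝ) → t ≤ MC (c j) (v j) s)))
    (μa : Fin m → ℝ) (hboxa : ∀ j, 0 ≤ μa j ∧ μa j ≤ n)
    (hBa : ∑ j, interp (c j) (μa j) ≤ B) :
    ∑ j, interp (v j) (μa j) ≤ ∑ j, interp (v j) (μ j) :=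
  threshold_greedy_optimal_budget_binding_general m n c v hv B μ hbox hbind t ht hthresh μa hboxa
    hBa
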